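/- Let D be an operator with [D, D*] = I, x a unit vector in Dom(DD*) ∩ Dom(D*D). Then (‖Dx + D*x‖² - |⟨Dx + D*x, x⟩|²) · (‖Dx - D*x‖² - |⟨Dx - D*x, x⟩|²) ≥ 1. -/

import Mathlib

/-! With `A = Dx + D*x` and `B = Dx - D*x`, the two factors are the squared lengths of the
components of `A` and `B` orthogonal to `x`, so by Cauchy–Schwarz their product dominates
`|⟪A, B⟫ - ⟪A, x⟫⟪x, B⟫|²`. Since `D + D*` is symmetric and `D - D*` antisymmetric, `⟪A, x⟫` is
real and `⟪x, B⟫` is imaginary, so the real part of this number is `Re ⟪A, B⟫ = ‖Dx‖² - ‖D*x‖²`,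
which the commutation relation makes equal to `-‖x‖² = -1`. -/

open scoped InnerProductSpace ComplexConjugate

section RCLikeInnerProductSpace

variable {𝕜 E : Type*} [RCLike 𝕜] [NormedAddCommGroup E] [InnerProductSpace 𝕜 E]

theorem re_inner_add_sub (a b : E) : RCLike.re ⟪a + b, a - b⟫_𝕜 = ‖a‖ ^ 2 - ‖b‖ ^ 2 := by
  rw [inner_add_left, inner_sub_right, inner_sub_right, map_add, map_sub, map_sub,
    inner_re_symm (𝕜 := 𝕜) b a, inner_self_eq_norm_sq, inner_self_eq_norm_sq]
  ring

variable {x : E} (hx : ‖x‖ = 1)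
include hx

theorem inner_sub_inner_smul_sub_inner_smul (a b : E) :
    ⟪a - ⟪x, a⟫_𝕜 • x, b - ⟪x, b⟫_𝕜 • x⟫_𝕜 = ⟪a, b⟫_𝕜 - ⟪a, x⟫_𝕜 * ⟪x, b⟫_𝕜 := by
  have hxx : ⟪x, x⟫_𝕜 = 1 := by simp [inner_self_eq_norm_sq_to_K, hx]
  simp only [inner_sub_left, inner_sub_right, inner_smul_left, inner_smul_right, hxx,
    inner_conj_symm]
  ring

theorem norm_sub_inner_smul_sq (a : E) :
    ‖a - ⟪x, a⟫_𝕜 • x‖ ^ 2 = ‖a‖ ^ 2 - ‖⟪a, x⟫_𝕜‖ ^ 2 := by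
  have h := congrArg RCLike.re (inner_sub_inner_smul_sub_inner_smul (𝕜 := 𝕜) hx a a)
  rw [map_sub, inner_mul_symm_re_eq_norm, norm_mul, norm_inner_symm x a] at h
  simpa [← sq] using h

theorem norm_inner_sub_sq_le (a b : E) :
    ‖⟪a, b⟫_𝕜 - ⟪a, x⟫_𝕜 * ⟪x, b⟫_𝕜‖ ^ 2 ≤
      (‖a‖ ^ 2 - ‖⟪a, x⟫_𝕜‖ ^ 2) * (‖b‖ ^ 2 - ‖⟪b, x⟫_𝕜‖ ^ 2) := by
  rw [← norm_sub_inner_smul_sq hx, ← norm_sub_inner_smul_sq hx, ← mul_pow,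
    ← inner_sub_inner_smul_sub_inner_smul hx]
  gcongr
  exact norm_inner_le_norm _ _

end RCLikeInnerProductSpace

section FormalAdjoint

variable {H : Type*} [NormedAddCommGroup H] [InnerProductSpace ℂ H] {D Dstar : H →ₗ[ℂ] H}
  (hadj : ∀ x y : H, ⟪D x, y⟫_ℂ = ⟪x, Dstar y⟫_ℂ)
include hadj

theorem inner_formalAdjoint_left (x y : H) : ⟪Dstar x, y⟫_ℂ = ⟪x, D y⟫_ℂ := by
  rw [← inner_conj_symm, ← hadj, inner_conj_symm]

theorem inner_formalAdjoint_self (x : H) : ⟪Dstar x, x⟫_ℂ = conj ⟪D x, x⟫_ℂ := by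
  rw [inner_formalAdjoint_left hadj, inner_conj_symm]

theorem im_inner_add_formalAdjoint_self (x : H) : (⟪D x + Dstar x, x⟫_ℂ).im = 0 := by
  rw [inner_add_left, inner_formalAdjoint_self hadj, Complex.add_conj]
  simp

theorem re_inner_sub_formalAdjoint_self (x : H) : (⟪D x - Dstar x, x⟫_ℂ).re = 0 := by
  rw [inner_sub_left, inner_formalAdjoint_self hadj, Complex.sub_conj]
  simp

theorem norm_sq_sub_norm_formalAdjoint_sq (hccr : ∀ y : H, D (Dstar y) - Dstar (D y) = y)
    (x : H) : ‖D x‖ ^ 2 - ‖Dstar x‖ ^ 2 = -‖x‖ ^ 2 := by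
  have h : ⟪D x, D x⟫_ℂ - ⟪Dstar x, Dstar x⟫_ℂ = -⟪x, x⟫_ℂ := by
    have hcomm : Dstar (D x) - D (Dstar x) = -x := by rw [← neg_sub, hccr]
    rw [hadj x (D x), inner_formalAdjoint_left hadj x (Dstar x), ← inner_sub_right, hcomm,
      inner_neg_right]
  simpa [inner_self_eq_norm_sq_to_K, ← Complex.ofReal_pow] using congrArg Complex.re h

end FormalAdjoint

/-- For `[D,D*] = I` and a unit vector `x`:
`(‖Dx + D*x‖² - |⟨Dx + D*x, x⟩|²)(‖Dx - D*x‖² - |⟨Dx - D*x, x⟩|²) ≥ 1`. -/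
theorem uncertainty_variance_version
    {H : Type*} [NormedAddCommGroup H] [InnerProductSpace ℂ H]
    (D Dstar : H →ₗ[ℂ] H)
    (hadj : ∀ x y : H, (inner ℂ (D x) y : ℂ) = inner ℂ x (Dstar y))
    (hccr : ∀ y : H, D (Dstar y) - Dstar (D y) = y)
    (x : H) (hx : ‖x‖ = 1) :
    (‖D x + Dstar x‖ ^ 2 - ‖(inner ℂ (D x + Dstar x) x : ℂ)‖ ^ 2) *
      (‖D x - Dstar x‖ ^ 2 - ‖(inner ℂ (D x - Dstar x) x : ℂ)‖ ^ 2) ≥ 1 := by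
  set A := D x + Dstar x
  set B := D x - Dstar x
  have hAB : (⟪A, B⟫_ℂ).re = -1 := by
    rw [← RCLike.re_to_complex, re_inner_add_sub,
      norm_sq_sub_norm_formalAdjoint_sq hadj hccr, hx, one_pow]
  have hcorr : (⟪A, x⟫_ℂ * ⟪x, B⟫_ℂ).re = 0 := by
    rw [← inner_conj_symm x B, Complex.mul_re, Complex.conj_re, Complex.conj_im,
      im_inner_add_formalAdjoint_self hadj, re_inner_sub_formalAdjoint_self hadj]
    ring
  calc (1 : ℝ) = ((⟪A, B⟫_ℂ - ⟪A, x⟫_ℂ * ⟪x, B⟫_ℂ).re) ^ 2 := by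
        rw [Complex.sub_re, hAB, hcorr]; norm_num
    _ ≤ ‖⟪A, B⟫_ℂ - ⟪A, x⟫_ℂ * ⟪x, B⟫_ℂ‖ ^ 2 := by
        rw [← sq_abs]; gcongr; exact Complex.abs_re_le_norm _
    _ ≤ _ := norm_inner_sub_sq_le hx A B
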